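/- (Euler's cevian identity, spherical case) Let ABC be a spherical triangle contained in an open quarter-sphere (all distances involved less than π/2), and let a, b, c be points on the sides BC, CA, AB such that the geodesic arcs Aa, Bb, Cc meet in a common point O inside the triangle. Then (tan AO / tan Oa)·(tan BO / tan Ob)·(tan CO / tan Oc) = tan AO / tan Oa + tan BO / tan Ob + tan CO / tan Oc + 2. -/
import Mathlib


open scoped RealInnerProductSpace

/-- Spherical (angular) distance between two unit vectors. -/
noncomputable def sphDist (u v : EuclideanSpace ℝ (Fin 3)) : ℝ :=
  Real.arccos ⟪u, v⟫

/-- `x` lies on the minimizing geodesic arc of the unit sphere joining the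
(non-antipodal) unit vectors `u` and `v`: the arc is the intersection of the
sphere with the convex cone spanned by `u` and `v`. -/
def onArc (x u v : EuclideanSpace ℝ (Fin 3)) : Prop :=
  ‖x‖ = 1 ∧ ∃ s t : ℝ, 0 ≤ s ∧ 0 ≤ t ∧ x = s • u + t • v

set_option maxHeartbeats 1000000 in
lemma inner_pos_of_close (n p q : EuclideanSpace ℝ (Fin 3))
    (hn : ‖n‖ = 1) (hp : ‖p‖ = 1) (hq : ‖q‖ = 1)
    (h1 : Real.arccos ⟪n, p⟫ < Real.pi / 4)
    (h2 : Real.arccos ⟪n, q⟫ < Real.pi / 4) : 0 < ⟪p, q⟫ := by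
  have hs1 : ⟪n, p⟫ ≤ 1 := by simpa [hn, hp] using real_inner_le_norm n p
  have hs1' : -1 ≤ ⟪n, p⟫ := by
    have := real_inner_le_norm n (-p)
    simp only [inner_neg_right, hn, hp, norm_neg] at this
    linarith
  have ht1 : ⟪n, q⟫ ≤ 1 := by simpa [hn, hq] using real_inner_le_norm n q
  have ht1' : -1 ≤ ⟪n, q⟫ := by
    have := real_inner_le_norm n (-q)
    simp only [inner_neg_right, hn, hq, norm_neg] at this
    linarith
  have hpi : Real.pi / 4 ≤ Real.pi := by linarith [Real.pi_pos]
  have hsgt : Real.sqrt 2 / 2 < ⟪n, p⟫ := by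
    have := Real.cos_lt_cos_of_nonneg_of_le_pi (Real.arccos_nonneg _) hpi h1
    rwa [Real.cos_arccos hs1' hs1, Real.cos_pi_div_four] at this
  have htgt : Real.sqrt 2 / 2 < ⟪n, q⟫ := by
    have := Real.cos_lt_cos_of_nonneg_of_le_pi (Real.arccos_nonneg _) hpi h2
    rwa [Real.cos_arccos ht1' ht1, Real.cos_pi_div_four] at this
  have hcs := real_inner_mul_inner_self_le (p - ⟪n, p⟫ • n) (q - ⟪n, q⟫ • n)
  have e1 : ⟪p - ⟪n, p⟫ • n, p - ⟪n, p⟫ • n⟫ = 1 - ⟪n, p⟫^2 := by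
    simp only [inner_sub_left, inner_sub_right, real_inner_smul_left, real_inner_smul_right,
      real_inner_self_eq_norm_sq, hp, hn, real_inner_comm p n, norm_smul,
      Real.norm_eq_abs, sq_abs, mul_one]
    ring
  have e2 : ⟪q - ⟪n, q⟫ • n, q - ⟪n, q⟫ • n⟫ = 1 - ⟪n, q⟫^2 := by
    simp only [inner_sub_left, inner_sub_right, real_inner_smul_left, real_inner_smul_right,
      real_inner_self_eq_norm_sq, hq, hn, real_inner_comm q n, norm_smul,
      Real.norm_eq_abs, sq_abs, mul_one]
    ring
  have e3 : ⟪p - ⟪n, p⟫ • n, q - ⟪n, q⟫ • n⟫ = ⟪p, q⟫ - ⟪n, p⟫ * ⟪n, q⟫ := by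
    simp only [inner_sub_left, inner_sub_right, real_inner_smul_left, real_inner_smul_right,
      real_inner_self_eq_norm_sq, hn, real_inner_comm p n, real_inner_comm q n]
    ring
  rw [e1, e2, e3] at hcs
  have hsqrt2 : (Real.sqrt 2)^2 = 2 := Real.sq_sqrt (by norm_num)
  have hst : 1/2 < ⟪n, p⟫ * ⟪n, q⟫ := by nlinarith [Real.sqrt_nonneg 2]
  have h1s : 1 - ⟪n, p⟫^2 < 1/2 := by nlinarith [Real.sqrt_nonneg 2]
  have h1t : 1 - ⟪n, q⟫^2 < 1/2 := by nlinarith [Real.sqrt_nonneg 2]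
  have h1s0 : 0 ≤ 1 - ⟪n, p⟫^2 := by nlinarith
  have h1t0 : 0 ≤ 1 - ⟪n, q⟫^2 := by nlinarith
  have hprod : (1 - ⟪n, p⟫^2) * (1 - ⟪n, q⟫^2) < 1/4 := by
    have := mul_lt_mul'' h1s h1t h1s0 h1t0
    linarith
  have key : ∀ x u v : ℝ, (x - u*v)*(x - u*v) ≤ (1-u^2)*(1-v^2) → 1/2 < u*v →
      (1-u^2)*(1-v^2) < 1/4 → 0 < x := by
    intro x u v hc h1 h2
    nlinarith [sq_nonneg (x - u*v + 1/2)]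
  exact key _ _ _ hcs hst hprod

lemma tan_ratio_aux (X Y O : EuclideanSpace ℝ (Fin 3))
    (hX : ‖X‖ = 1) (hY : ‖Y‖ = 1) (hO : ‖O‖ = 1)
    (s t : ℝ) (hs : 0 < s) (ht : 0 < t) (hOeq : O = s • X + t • Y)
    (hOY : O ≠ Y) (hu : 0 < ⟪X, O⟫) (hw : 0 < ⟪O, Y⟫) :
    Real.tan (Real.arccos ⟪X, O⟫) / Real.tan (Real.arccos ⟪O, Y⟫)
      = (t * ⟪O, Y⟫) / (s * ⟪X, O⟫) := by
  set u : ℝ := ⟪X, O⟫ with hu_def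
  set w : ℝ := ⟪O, Y⟫ with hw_def
  have hXY : ⟪X, Y⟫ = ⟪X, Y⟫ := rfl
  have hu_eq : u = s + t * ⟪X, Y⟫ := by
    rw [hu_def, hOeq]
    simp only [inner_add_right, real_inner_smul_right, real_inner_self_eq_norm_sq, hX]
    ring
  have hw_eq : w = s * ⟪X, Y⟫ + t := by
    rw [hw_def, hOeq]
    simp only [inner_add_left, real_inner_smul_left, real_inner_self_eq_norm_sq, hY,
      real_inner_comm Y X]
    ring
  have hnorm : s * u + t * w = 1 := by
    have h1 : ⟪O, O⟫ = 1 := by rw [real_inner_self_eq_norm_sq, hO]; norm_num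
    calc s * u + t * w = ⟪s • X + t • Y, O⟫ := by
          rw [hu_def, hw_def]
          simp only [inner_add_left, real_inner_smul_left, real_inner_comm Y O]
      _ = 1 := by rw [← hOeq, h1]
  have key : s^2 * (1 - u^2) = t^2 * (1 - w^2) := by
    rw [hu_eq, hw_eq] at hnorm ⊢
    nlinarith [hnorm]
  have hw1 : w < 1 := by
    have hle : w ≤ 1 := by simpa [hO, hY] using real_inner_le_norm O Y
    rcases lt_or_eq_of_le hle with h | h
    · exact h
    · exact absurd ((inner_eq_one_iff_of_norm_eq_one hO hY).mp h) hOY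
  have h1w : 0 < 1 - w^2 := by nlinarith
  have h1u : 1 - u^2 = (t/s)^2 * (1 - w^2) := by
    field_simp
    nlinarith [key]
  have hsq : Real.sqrt (1 - u^2) = (t/s) * Real.sqrt (1 - w^2) := by
    rw [h1u, Real.sqrt_mul (sq_nonneg _), Real.sqrt_sq (by positivity : (0:ℝ) ≤ t/s)]
  have hsw : 0 < Real.sqrt (1 - w^2) := Real.sqrt_pos.mpr h1w
  rw [Real.tan_arccos, Real.tan_arccos, hsq]
  rw [div_div_div_comm]
  field_simp

lemma coeff_unique3 (A B C : EuclideanSpace ℝ (Fin 3))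
    (hind : LinearIndependent ℝ ![A, B, C])
    (x y z x' y' z' : ℝ)
    (h : x • A + y • B + z • C = x' • A + y' • B + z' • C) :
    x = x' ∧ y = y' ∧ z = z' := by
  rw [Fintype.linearIndependent_iff] at hind
  have h0 : ∑ i : Fin 3, ![x - x', y - y', z - z'] i • ![A, B, C] i = 0 := by
    simp only [Fin.sum_univ_three, Matrix.cons_val_zero, Matrix.cons_val_one, Matrix.head_cons,
      Matrix.cons_val_two, Matrix.tail_cons]
    linear_combination (norm := module) h
  have hz := hind ![x - x', y - y', z - z'] h0
  have h1 := hz 0; have h2 := hz 1; have h3 := hz 2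
  simp only [Matrix.cons_val_zero, Matrix.cons_val_one, Matrix.head_cons,
    Matrix.cons_val_two, Matrix.tail_cons] at h1 h2 h3
  exact ⟨by linarith, by linarith, by linarith⟩

lemma smul_eq_self3 (O Y : EuclideanSpace ℝ (Fin 3)) (hO : ‖O‖ = 1) (hY : ‖Y‖ = 1)
    (t : ℝ) (ht : 0 ≤ t) (h : O = t • Y) : O = Y := by
  have h1 : t = 1 := by
    have h2 := congrArg norm h
    rw [norm_smul, hO, hY, Real.norm_eq_abs, abs_of_nonneg ht, mul_one] at h2
    linarith
  rwa [h1, one_smul] at h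

/-- **Euler's cevian identity (spherical case).**  Let `ABC` be a spherical
triangle contained in an open quarter-sphere (a spherical disc of radius `π/4`
centered at some unit vector `n`), let `a, b, c` be points on the sides
`BC, CA, AB`, and suppose the geodesic arcs `Aa, Bb, Cc` pass through a common
point `O`.  Then
`(tan AO / tan Oa)·(tan BO / tan Ob)·(tan CO / tan Oc)
   = tan AO / tan Oa + tan BO / tan Ob + tan CO / tan Oc + 2`. -/
theorem euler_cevian_spherical (A B C a b c O : EuclideanSpace ℝ (Fin 3))
    (hA : ‖A‖ = 1) (hB : ‖B‖ = 1) (hC : ‖C‖ = 1)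
    (hind : LinearIndependent ℝ ![A, B, C])
    (hquarter : ∃ n : EuclideanSpace ℝ (Fin 3), ‖n‖ = 1 ∧
      ∀ p ∈ ({A, B, C, a, b, c, O} : Set (EuclideanSpace ℝ (Fin 3))),
        sphDist n p < Real.pi / 4)
    (ha : onArc a B C) (hb : onArc b C A) (hc : onArc c A B)
    (hOa : onArc O A a) (hOb : onArc O B b) (hOc : onArc O C c)
    (hOA : O ≠ A) (hOB : O ≠ B) (hOC : O ≠ C)
    (hOa' : O ≠ a) (hOb' : O ≠ b) (hOc' : O ≠ c) :
    (Real.tan (sphDist A O) / Real.tan (sphDist O a)) *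
        (Real.tan (sphDist B O) / Real.tan (sphDist O b)) *
          (Real.tan (sphDist C O) / Real.tan (sphDist O c)) =
      Real.tan (sphDist A O) / Real.tan (sphDist O a) +
        Real.tan (sphDist B O) / Real.tan (sphDist O b) +
          Real.tan (sphDist C O) / Real.tan (sphDist O c) + 2 := by
  obtain ⟨n, hn, hqr⟩ := hquarter
  obtain ⟨hO1, s1, t1, hs1, ht1, hO1eq⟩ := hOa
  obtain ⟨ha1, sa, ta, hsa, hta, haeq⟩ := ha
  obtain ⟨-, s2, t2, hs2, ht2, hO2eq⟩ := hOb
  obtain ⟨hb1, sb, tb, hsb, htb, hbeq⟩ := hb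
  obtain ⟨-, s3, t3, hs3, ht3, hO3eq⟩ := hOc
  obtain ⟨hc1, sc, tc, hsc, htc, hceq⟩ := hc
  -- distances to the pole
  have dA : Real.arccos ⟪n, A⟫ < Real.pi / 4 := by simpa [sphDist] using hqr A (by simp)
  have dB : Real.arccos ⟪n, B⟫ < Real.pi / 4 := by simpa [sphDist] using hqr B (by simp)
  have dC : Real.arccos ⟪n, C⟫ < Real.pi / 4 := by simpa [sphDist] using hqr C (by simp)
  have da : Real.arccos ⟪n, a⟫ < Real.pi / 4 := by simpa [sphDist] using hqr a (by simp)
  have db : Real.arccos ⟪n, b⟫ < Real.pi / 4 := by simpa [sphDist] using hqr b (by simp)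
  have dc : Real.arccos ⟪n, c⟫ < Real.pi / 4 := by simpa [sphDist] using hqr c (by simp)
  have dO : Real.arccos ⟪n, O⟫ < Real.pi / 4 := by simpa [sphDist] using hqr O (by simp)
  -- positivity of the relevant inner products
  have hqA : 0 < ⟪O, A⟫ := inner_pos_of_close n O A hn hO1 hA dO dA
  have hqB : 0 < ⟪O, B⟫ := inner_pos_of_close n O B hn hO1 hB dO dB
  have hqC : 0 < ⟪O, C⟫ := inner_pos_of_close n O C hn hO1 hC dO dC
  have hqa : 0 < ⟪O, a⟫ := inner_pos_of_close n O a hn hO1 ha1 dO da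
  have hqb : 0 < ⟪O, b⟫ := inner_pos_of_close n O b hn hO1 hb1 dO db
  have hqc : 0 < ⟪O, c⟫ := inner_pos_of_close n O c hn hO1 hc1 dO dc
  -- positivity of the cevian coefficients
  have hs1p : 0 < s1 := by
    rcases hs1.lt_or_eq with h | h; · exact h
    exact absurd (smul_eq_self3 O a hO1 ha1 t1 ht1 (by rw [hO1eq, ← h, zero_smul, zero_add])) hOa'
  have ht1p : 0 < t1 := by
    rcases ht1.lt_or_eq with h | h; · exact h
    exact absurd (smul_eq_self3 O A hO1 hA s1 hs1 (by rw [hO1eq, ← h, zero_smul, add_zero])) hOA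
  have hs2p : 0 < s2 := by
    rcases hs2.lt_or_eq with h | h; · exact h
    exact absurd (smul_eq_self3 O b hO1 hb1 t2 ht2 (by rw [hO2eq, ← h, zero_smul, zero_add])) hOb'
  have ht2p : 0 < t2 := by
    rcases ht2.lt_or_eq with h | h; · exact h
    exact absurd (smul_eq_self3 O B hO1 hB s2 hs2 (by rw [hO2eq, ← h, zero_smul, add_zero])) hOB
  have hs3p : 0 < s3 := by
    rcases hs3.lt_or_eq with h | h; · exact h
    exact absurd (smul_eq_self3 O c hO1 hc1 t3 ht3 (by rw [hO3eq, ← h, zero_smul, zero_add])) hOc'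
  have ht3p : 0 < t3 := by
    rcases ht3.lt_or_eq with h | h; · exact h
    exact absurd (smul_eq_self3 O C hO1 hC s3 hs3 (by rw [hO3eq, ← h, zero_smul, add_zero])) hOC
  -- barycentric representations
  have rep1 : O = s1 • A + (t1 * sa) • B + (t1 * ta) • C := by
    rw [hO1eq, haeq]; module
  have rep2 : O = (t2 * tb) • A + s2 • B + (t2 * sb) • C := by
    rw [hO2eq, hbeq]; module
  have rep3 : O = (t3 * sc) • A + (t3 * tc) • B + s3 • C := by
    rw [hO3eq, hceq]; module
  obtain ⟨e12a, e12b, e12c⟩ := coeff_unique3 A B C hind _ _ _ _ _ _ (rep1.symm.trans rep2)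
  obtain ⟨e13a, e13b, e13c⟩ := coeff_unique3 A B C hind _ _ _ _ _ _ (rep1.symm.trans rep3)
  -- tangent ratios
  have r1 := tan_ratio_aux A a O hA ha1 hO1 s1 t1 hs1p ht1p hO1eq hOa'
    (by rwa [real_inner_comm]) hqa
  have r2 := tan_ratio_aux B b O hB hb1 hO1 s2 t2 hs2p ht2p hO2eq hOb'
    (by rwa [real_inner_comm]) hqb
  have r3 := tan_ratio_aux C c O hC hc1 hO1 s3 t3 hs3p ht3p hO3eq hOc'
    (by rwa [real_inner_comm]) hqc
  -- numerators in barycentric form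
  have hnum1 : t1 * ⟪O, a⟫ = s2 * ⟪O, B⟫ + s3 * ⟪O, C⟫ := by
    rw [haeq]
    simp only [inner_add_right, real_inner_smul_right]
    linear_combination ⟪O, B⟫ * e12b + ⟪O, C⟫ * e13c
  have hnum2 : t2 * ⟪O, b⟫ = s3 * ⟪O, C⟫ + s1 * ⟪O, A⟫ := by
    rw [hbeq]
    simp only [inner_add_right, real_inner_smul_right]
    linear_combination ⟪O, C⟫ * (e12c.symm.trans e13c) + ⟪O, A⟫ * e12a.symm
  have hnum3 : t3 * ⟪O, c⟫ = s1 * ⟪O, A⟫ + s2 * ⟪O, B⟫ := by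
    rw [hceq]
    simp only [inner_add_right, real_inner_smul_right]
    linear_combination ⟪O, A⟫ * e13a.symm + ⟪O, B⟫ * (e13b.symm.trans e12b)
  simp only [sphDist]
  rw [r1, r2, r3, real_inner_comm O A, real_inner_comm O B, real_inner_comm O C,
    hnum1, hnum2, hnum3]
  have hP : 0 < s1 * ⟪O, A⟫ := mul_pos hs1p hqA
  have hQ : 0 < s2 * ⟪O, B⟫ := mul_pos hs2p hqB
  have hR : 0 < s3 * ⟪O, C⟫ := mul_pos hs3p hqC
  set P := s1 * ⟪O, A⟫
  set Q := s2 * ⟪O, B⟫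
  set R := s3 * ⟪O, C⟫
  field_simp
  ring
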